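/- arXiv:2411.11763 — 3 statements merged into one kernel-verified Lean document; each statement's English description precedes it below -/
import Mathlib

section
/- With Q^rev and the congruence ~ (generated by imposing mediality on Q^rev) as above, for every a ∈ N one has a₁ ~ (a − 1)₁. -/
open LaurentPolynomial

noncomputable section

/-- The Laurent polynomial ring ℤ[t,t⁻¹]. -/
abbrev Lring : Type := LaurentPolynomial ℤ

/-- The principal ideal J = (t² + t − 1). -/
def Jideal : Ideal Lring := Ideal.span {T 1 ^ 2 + T 1 - 1}

/-- N = ℤ[t,t⁻¹]/(t² + t − 1). -/
abbrev Nring : Type := Lring ⧸ Jideal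

/-- The image of t in N. -/
def tN : Nring := Ideal.Quotient.mk Jideal (T 1)


/-- The quandle carrier: disjoint union of two copies of N, indexed by Fin 2
(index 0 is Q₁, index 1 is Q₂); `(i, x)` is the element `x_i`. -/
abbrev Qc : Type := Fin 2 × Nring

/-- m₁ = 0, m₂ = 1. -/
def mC : Fin 2 → Nring := ![0, 1]

/-- The quandle operation x_i ▷ y_j = (m_j − m_i + t·x + (1−t)·y)_i. -/
def qop (p q : Qc) : Qc := (p.1, mC q.1 - mC p.1 + tN * p.2 + (1 - tN) * q.2)

/-- The inverse translations: β_{y_j}⁻¹(x_i) = (t⁻¹·(m_i − m_j + x − (1−t)·y))_i. -/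
def qinv (p q : Qc) : Qc :=
  (p.1, Ring.inverse tN * (mC p.1 - mC q.1 + p.2 - (1 - tN) * q.2))


/-- The orientation-reversal of Q on the orbit Q₂: ▷' agrees with ▷ when the
right operand lies in Q₁, and equals β⁻¹ when the right operand lies in Q₂. -/
def rop (p q : Qc) : Qc := if q.1 = 1 then qinv p q else qop p q

/-- The inverse translations of the reversed quandle. -/
def rinv (p q : Qc) : Qc := if q.1 = 1 then qop p q else qinv p q

/-- The smallest quandle congruence on Q^rev whose quotient is medial:
the equivalence relation compatible with ▷' and its inverse, generated by
the medial law (w ▷' x) ▷' (y ▷' z) ~ (w ▷' y) ▷' (x ▷' z). -/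
inductive medRel : Qc → Qc → Prop
  | refl (a : Qc) : medRel a a
  | symm {a b : Qc} : medRel a b → medRel b a
  | trans {a b c : Qc} : medRel a b → medRel b c → medRel a c
  | compat_op {a b c d : Qc} : medRel a b → medRel c d → medRel (rop a c) (rop b d)
  | compat_inv {a b c d : Qc} : medRel a b → medRel c d → medRel (rinv a c) (rinv b d)
  | medial (w x y z : Qc) :
      medRel (rop (rop w x) (rop y z)) (rop (rop w y) (rop x z))


lemma tN_sq : tN ^ 2 + tN = 1 := by
  have h : Ideal.Quotient.mk Jideal (T 1 ^ 2 + T 1 - 1 : Lring) = 0 :=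
    Ideal.Quotient.eq_zero_iff_mem.mpr (Ideal.subset_span rfl)
  simp only [map_sub, map_add, map_pow, map_one, sub_eq_zero] at h
  simpa [tN] using h

def tNu : Nringˣ :=
  ⟨tN, 1 + tN, by linear_combination tN_sq, by linear_combination tN_sq⟩

/-- In the medial congruence on Q^rev, a₁ ~ (a − 1)₁ for every a ∈ N. -/
theorem stmt13 : ∀ a : Nring, medRel ((0 : Fin 2), a) ((0 : Fin 2), a - 1) := by
  intro a
  have hinv : Ring.inverse tN = 1 + tN := Ring.inverse_unit tNu
  have h := medRel.medial ((0 : Fin 2), a - tN) ((0 : Fin 2), 2 + tN)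
      ((1 : Fin 2), (0 : Nring)) ((0 : Fin 2), (0 : Nring))
  have e1 : rop (rop ((0 : Fin 2), a - tN) ((0 : Fin 2), 2 + tN))
      (rop ((1 : Fin 2), (0 : Nring)) ((0 : Fin 2), (0 : Nring))) = ((0 : Fin 2), a) := by
    simp only [rop, qop, qinv, mC, hinv, Matrix.cons_val_zero,
      Matrix.cons_val_one, Matrix.head_cons,
      (show (0:Fin 2) ≠ 1 from by decide), (show ((1:Fin 2) = 1) from rfl),
      if_true, if_false, ite_true, ite_false]
    refine Prod.ext rfl ?_
    show _ = a
    linear_combination (a - 2*tN - 2) * tN_sq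
  have e2 : rop (rop ((0 : Fin 2), a - tN) ((1 : Fin 2), (0 : Nring)))
      (rop ((0 : Fin 2), 2 + tN) ((0 : Fin 2), (0 : Nring))) = ((0 : Fin 2), a - 1) := by
    simp only [rop, qop, qinv, mC, hinv, Matrix.cons_val_zero,
      Matrix.cons_val_one, Matrix.head_cons,
      (show (0:Fin 2) ≠ 1 from by decide), (show ((1:Fin 2) = 1) from rfl),
      if_true, if_false, ite_true, ite_false]
    refine Prod.ext rfl ?_
    show _ = a - 1
    linear_combination (a - 2*tN - 1) * tN_sq
  rwa [e1, e2] at h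
end
end

section
/- With Q^rev the orientation-reversal on orbit Q₂ of the medial quandle Q over N = ℤ[t, t^{-1}]/(t² + t − 1), and ~ the smallest congruence making the quotient medial: for all a ∈ N, a₁ ~ 0₁. That is, the image of the orbit Q₁ in the medial quotient Q^rev_M is a single element. -/
open LaurentPolynomial

noncomputable section

section Aux

set_option maxHeartbeats 1000000
set_option synthInstance.maxHeartbeats 200000

private lemma tsq : tN * tN = 1 - tN := by
  have h : Ideal.Quotient.mk Jideal (T 1 ^ 2 + T 1 - 1) = 0 :=
    Ideal.Quotient.eq_zero_iff_mem.mpr (Ideal.subset_span (Set.mem_singleton _))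
  rw [map_sub, map_add, map_pow, map_one] at h
  have h' : tN ^ 2 + tN - 1 = 0 := h
  linear_combination h'

private lemma tmul : tN * (tN + 1) = 1 := by linear_combination tsq

private def tUnit : Nringˣ := ⟨tN, tN + 1, tmul, by linear_combination tsq⟩

private lemma hRinv : Ring.inverse tN = tN + 1 := Ring.inverse_unit tUnit

private lemma rop00 (a b : Nring) :
    rop ((0 : Fin 2), a) ((0 : Fin 2), b) = ((0 : Fin 2), tN * a + (1 - tN) * b) := by
  simp [rop, qop, mC]

private lemma rop01 (a b : Nring) :
    rop ((0 : Fin 2), a) ((1 : Fin 2), b) =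
      ((0 : Fin 2), (tN + 1) * (a - 1 - (1 - tN) * b)) := by
  simp only [rop, qinv, mC, hRinv, Prod.mk.injEq]
  norm_num
  ring

private lemma rop11 (a b : Nring) :
    rop ((1 : Fin 2), a) ((1 : Fin 2), b) =
      ((1 : Fin 2), (tN + 1) * (a - (1 - tN) * b)) := by
  simp only [rop, qinv, mC, hRinv, Prod.mk.injEq]
  norm_num

private lemma rinv00 (a b : Nring) :
    rinv ((0 : Fin 2), a) ((0 : Fin 2), b) = ((0 : Fin 2), (tN + 1) * (a - (1 - tN) * b)) := by
  simp only [rinv, qinv, mC, hRinv, Prod.mk.injEq]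
  norm_num

private lemma aff {a b : Nring} (c : Nring) (h : medRel ((0 : Fin 2), a) ((0 : Fin 2), b)) :
    medRel ((0 : Fin 2), tN * a + (1 - tN) * c) ((0 : Fin 2), tN * b + (1 - tN) * c) := by
  have := medRel.compat_op h (medRel.refl ((0 : Fin 2), c))
  rwa [rop00, rop00] at this

private lemma aff_inv {a b : Nring} (c : Nring)
    (h : medRel ((0 : Fin 2), a) ((0 : Fin 2), b)) :
    medRel ((0 : Fin 2), (tN + 1) * (a - (1 - tN) * c))
      ((0 : Fin 2), (tN + 1) * (b - (1 - tN) * c)) := by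
  have := medRel.compat_inv h (medRel.refl ((0 : Fin 2), c))
  rwa [rinv00, rinv00] at this

private lemma shiftRel {a b : Nring} (h : medRel ((0 : Fin 2), a) ((0 : Fin 2), b))
    (c : Nring) : medRel ((0 : Fin 2), a + c) ((0 : Fin 2), b + c) := by
  have h2 := aff_inv 0 (aff ((tN + 1) * c) h)
  have e : ∀ x : Nring, (tN + 1) * (tN * x + (1 - tN) * ((tN + 1) * c) - (1 - tN) * 0)
      = x + c := by intro x; linear_combination (x - tN * c) * tsq
  rwa [e, e] at h2

/-- The base relation: t ~ 0 in Q₁, from a medial defect. -/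
private lemma base : medRel ((0 : Fin 2), tN) ((0 : Fin 2), (0 : Nring)) := by
  have h := medRel.medial ((0 : Fin 2), (0 : Nring)) ((0 : Fin 2), (0 : Nring))
    ((1 : Fin 2), (0 : Nring)) ((1 : Fin 2), (1 : Nring))
  rw [rop00, rop11, rop01, rop01, rop01, rop00] at h
  have e1 : (tN + 1) * (tN * 0 + (1 - tN) * 0 - 1 - (1 - tN) * ((tN + 1) * (0 - (1 - tN) * 1)))
      = -2 * tN := by linear_combination (tN * tN - tN) * tsq
  have e2 : tN * ((tN + 1) * (0 - 1 - (1 - tN) * 0)) +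
      (1 - tN) * ((tN + 1) * (0 - 1 - (1 - tN) * 1)) = -3 * tN := by
    linear_combination (2 - tN) * tsq
  rw [e1, e2] at h
  have h2 := shiftRel h (3 * tN)
  rw [show -2 * tN + 3 * tN = tN by ring, show -3 * tN + 3 * tN = 0 by ring] at h2
  exact h2

private def Pset : AddSubgroup Nring where
  carrier := {a | medRel ((0 : Fin 2), a) ((0 : Fin 2), (0 : Nring))}
  zero_mem' := medRel.refl _
  add_mem' := by
    intro a b ha hb
    have h1 := shiftRel ha b
    rw [zero_add] at h1
    exact h1.trans hb
  neg_mem' := by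
    intro a ha
    have h1 := shiftRel ha (-a)
    rw [add_neg_cancel, zero_add] at h1
    exact medRel.symm h1

private lemma mem_t_mul {a : Nring} (h : a ∈ Pset) : tN * a ∈ Pset := by
  have h1 := aff 0 h
  have e : ∀ x : Nring, tN * x + (1 - tN) * 0 = tN * x := by intro x; ring
  rw [e, e, mul_zero] at h1
  exact h1

private lemma mem_tinv_mul {a : Nring} (h : a ∈ Pset) : (tN + 1) * a ∈ Pset := by
  have h1 := aff_inv 0 h
  have e : ∀ x : Nring, (tN + 1) * (x - (1 - tN) * 0) = (tN + 1) * x := by intro x; ring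
  rw [e, e, mul_zero] at h1
  exact h1

private lemma one_mem_P : (1 : Nring) ∈ Pset := by
  have h := mem_tinv_mul (show tN ∈ Pset from base)
  rwa [show (tN + 1) * tN = 1 by linear_combination tsq] at h

private lemma T_mem (n : ℤ) : Ideal.Quotient.mk Jideal (T n) ∈ Pset := by
  induction n using Int.induction_on with
  | zero => simpa [LaurentPolynomial.T_zero] using one_mem_P
  | succ k ih =>
      have h1 : Ideal.Quotient.mk Jideal (T ((k : ℤ) + 1)) = tN * Ideal.Quotient.mk Jideal (T k) := by
        rw [show ((k : ℤ) + 1) = 1 + k by ring, LaurentPolynomial.T_add, map_mul]; rfl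
      rw [h1]; exact mem_t_mul ih
  | pred k ih =>
      have key : Ideal.Quotient.mk Jideal (T (-(k : ℤ) - 1))
          = (tN + 1) * Ideal.Quotient.mk Jideal (T (-(k : ℤ))) := by
        have hmem : (T (-(k:ℤ) - 1) * (T 1 ^ 2 + T 1 - 1) : Lring) ∈ Jideal :=
          Ideal.mul_mem_left _ _ (Ideal.subset_span (Set.mem_singleton _))
        have h0 : Ideal.Quotient.mk Jideal (T (-(k:ℤ) - 1) * (T 1 ^ 2 + T 1 - 1)) = 0 :=
          Ideal.Quotient.eq_zero_iff_mem.mpr hmem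
        have expand : (T (-(k:ℤ) - 1) * (T 1 ^ 2 + T 1 - 1) : Lring)
            = T (-(k:ℤ) + 1) + T (-(k:ℤ)) - T (-(k:ℤ) - 1) := by
          rw [show (T 1 ^ 2 : Lring) = T 2 by rw [T_pow]; norm_num,
            mul_sub, mul_add, mul_one, ← T_add, ← T_add,
            show (-(k:ℤ) - 1) + 2 = -(k:ℤ) + 1 by ring,
            show (-(k:ℤ) - 1) + 1 = -(k:ℤ) by ring]
        rw [expand, map_sub, map_add, sub_eq_zero] at h0
        have hT1 : Ideal.Quotient.mk Jideal (T (-(k:ℤ) + 1))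
            = tN * Ideal.Quotient.mk Jideal (T (-(k:ℤ))) := by
          rw [show (-(k:ℤ) + 1) = 1 + -(k:ℤ) by ring, LaurentPolynomial.T_add, map_mul]; rfl
        rw [← h0, hT1]; ring
      rw [key]; exact mem_tinv_mul ih

end Aux

/-- In the medial congruence on Q^rev, a₁ ~ 0₁ for every a ∈ N: the image of
Q₁ in the medial quotient is a single element. -/
theorem stmt15 : ∀ a : Nring, medRel ((0 : Fin 2), a) ((0 : Fin 2), (0 : Nring)) := by
  intro a
  obtain ⟨f, rfl⟩ := Ideal.Quotient.mk_surjective (I := Jideal) a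
  show Ideal.Quotient.mk Jideal f ∈ Pset
  induction f using LaurentPolynomial.induction_on' with
  | add p q hp hq => rw [map_add]; exact Pset.add_mem hp hq
  | C_mul_T n c =>
      have h1 : Ideal.Quotient.mk Jideal (LaurentPolynomial.C c * T n)
          = c • Ideal.Quotient.mk Jideal (T n) := by
        rw [map_mul, eq_intCast (LaurentPolynomial.C (R := ℤ)) c, map_intCast, zsmul_eq_mul]
      rw [h1]
      exact zsmul_mem (T_mem n) c
end
end

section
/- Let Q be the medial quandle on two copies of N = ℤ[t, t^{-1}]/(t² + t − 1) defined by x_i ▷ y_j = (m_j − m_i + t·x + (1 − t)·y)_i, with m₁ = 0, m₂ = 1, and let Q^rev be obtained from Q by reversing the orbit Q₂. Then the largest medial quotient Q^rev_M of Q^rev has exactly two elements, and the quandle operation on it is trivial (x ▷ y = x). -/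
open LaurentPolynomial

noncomputable section

lemma hJ : tN ^ 2 + tN - 1 = 0 := by
  have h : Ideal.Quotient.mk Jideal (T 1 ^ 2 + T 1 - 1) = 0 :=
    Ideal.Quotient.eq_zero_iff_mem.mpr (Ideal.subset_span (Set.mem_singleton _))
  simpa only [tN, map_sub, map_add, map_pow, map_one] using h

lemma tN_mul : tN * (1 + tN) = 1 := by linear_combination hJ

def tU : (Nring)ˣ := ⟨tN, 1 + tN, tN_mul, by linear_combination hJ⟩

lemma hinv : Ring.inverse tN = 1 + tN := by
  have : Ring.inverse (tU : Nring) = ((tU⁻¹ : (Nring)ˣ) : Nring) := Ring.inverse_unit tU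
  simpa [tU] using this

lemma mkT_neg_one : Ideal.Quotient.mk Jideal (T (-1)) = 1 + tN := by
  have h1 : tN * Ideal.Quotient.mk Jideal (T (-1)) = 1 := by
    rw [tN, ← map_mul, ← T_add]; norm_num
  calc Ideal.Quotient.mk Jideal (T (-1))
      = Ideal.Quotient.mk Jideal (T (-1)) * (tN * (1 + tN)) := by rw [tN_mul, mul_one]
    _ = (tN * Ideal.Quotient.mk Jideal (T (-1))) * (1 + tN) := by ring
    _ = 1 + tN := by rw [h1, one_mul]

lemma mC0 : mC 0 = 0 := rfl
lemma mC1 : mC 1 = 1 := rfl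

lemma rop_fst (p q : Qc) : (rop p q).1 = p.1 := by
  unfold rop qinv qop; split <;> rfl

lemma rinv_fst (p q : Qc) : (rinv p q).1 = p.1 := by
  unfold rinv qinv qop; split <;> rfl

lemma rop_zero (p : Qc) (b : Nring) : rop p ((0 : Fin 2), b) = qop p ((0 : Fin 2), b) := by
  simp [rop]

lemma rop_one (p : Qc) (b : Nring) : rop p ((1 : Fin 2), b) = qinv p ((1 : Fin 2), b) := by
  simp [rop]

lemma rinv_zero (p : Qc) (b : Nring) : rinv p ((0 : Fin 2), b) = qinv p ((0 : Fin 2), b) := by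
  simp [rinv]

lemma transl {i : Fin 2} {c c' : Nring} (h : medRel (i, c) (i, c')) (x : Nring) :
    medRel (i, x) (i, x + tN * (c' - c)) := by
  set b : Nring := (2 + tN) * (x + mC i - tN * c) with hb
  have h2 := medRel.compat_op h (medRel.refl ((0 : Fin 2), b))
  rw [rop_zero, rop_zero] at h2
  have e1 : qop (i, c) ((0 : Fin 2), b) = (i, x) := by
    refine Prod.ext rfl ?_
    show mC 0 - mC i + tN * c + (1 - tN) * b = x
    rw [mC0, hb]
    linear_combination (-(x + mC i - tN * c)) * hJ
  have e2 : qop (i, c') ((0 : Fin 2), b) = (i, x + tN * (c' - c)) := by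
    refine Prod.ext rfl ?_
    show mC 0 - mC i + tN * c' + (1 - tN) * b = x + tN * (c' - c)
    rw [mC0, hb]
    linear_combination (-(x + mC i - tN * c)) * hJ
  rwa [e1, e2] at h2

lemma translInv {i : Fin 2} {c c' : Nring} (h : medRel (i, c) (i, c')) (x : Nring) :
    medRel (i, x) (i, x + (1 + tN) * (c' - c)) := by
  set b : Nring := (2 + tN) * (mC i + c - tN * x) with hb
  have h2 := medRel.compat_inv h (medRel.refl ((0 : Fin 2), b))
  rw [rinv_zero, rinv_zero] at h2
  have e1 : qinv (i, c) ((0 : Fin 2), b) = (i, x) := by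
    refine Prod.ext rfl ?_
    show Ring.inverse tN * (mC i - mC 0 + c - (1 - tN) * b) = x
    rw [hinv, mC0, hb]
    linear_combination (x + (1 + tN) * (mC i + c - tN * x)) * hJ
  have e2 : qinv (i, c') ((0 : Fin 2), b) = (i, x + (1 + tN) * (c' - c)) := by
    refine Prod.ext rfl ?_
    show Ring.inverse tN * (mC i - mC 0 + c' - (1 - tN) * b) = x + (1 + tN) * (c' - c)
    rw [hinv, mC0, hb]
    linear_combination (x + (1 + tN) * (mC i + c - tN * x)) * hJ
  rwa [e1, e2] at h2

set_option maxHeartbeats 1000000 in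
lemma base_rel (i : Fin 2) : medRel ((i, -2 - tN) : Qc) (i, -2) := by
  have h := medRel.medial ((i, 0) : Qc) ((0 : Fin 2), 0) ((1 : Fin 2), 1) ((1 : Fin 2), 0)
  have a1 : rop ((i, 0) : Qc) ((0 : Fin 2), 0) = (i, - mC i) := by
    rw [rop_zero]
    refine Prod.ext rfl ?_
    show mC 0 - mC i + tN * 0 + (1 - tN) * 0 = - mC i
    rw [mC0]; ring
  have a2 : rop (((1 : Fin 2), 1) : Qc) ((1 : Fin 2), 0) = ((1 : Fin 2), 1 + tN) := by
    rw [rop_one]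
    refine Prod.ext rfl ?_
    show Ring.inverse tN * (mC 1 - mC 1 + 1 - (1 - tN) * 0) = 1 + tN
    rw [hinv]; ring
  have a3 : rop ((i, - mC i) : Qc) ((1 : Fin 2), 1 + tN) = (i, -2 - tN) := by
    rw [rop_one]
    refine Prod.ext rfl ?_
    show Ring.inverse tN * (mC i - mC 1 + (- mC i) - (1 - tN) * (1 + tN)) = -2 - tN
    rw [hinv, mC1]
    linear_combination tN * hJ
  have a4 : rop ((i, 0) : Qc) ((1 : Fin 2), 1) = (i, (1 + tN) * (mC i - 2 + tN)) := by
    rw [rop_one]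
    refine Prod.ext rfl ?_
    show Ring.inverse tN * (mC i - mC 1 + 0 - (1 - tN) * 1) = (1 + tN) * (mC i - 2 + tN)
    rw [hinv, mC1]; ring
  have a5 : rop (((0 : Fin 2), 0) : Qc) ((1 : Fin 2), 0) = ((0 : Fin 2), -1 - tN) := by
    rw [rop_one]
    refine Prod.ext rfl ?_
    show Ring.inverse tN * (mC 0 - mC 1 + 0 - (1 - tN) * 0) = -1 - tN
    rw [hinv, mC0, mC1]; ring
  have a6 : rop ((i, (1 + tN) * (mC i - 2 + tN)) : Qc) ((0 : Fin 2), -1 - tN) = (i, -2) := by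
    rw [rop_zero]
    refine Prod.ext rfl ?_
    show mC 0 - mC i + tN * ((1 + tN) * (mC i - 2 + tN)) + (1 - tN) * (-1 - tN) = -2
    rw [mC0]
    linear_combination (mC i + tN - 1) * hJ
  rw [a1, a2, a3, a4, a5, a6] at h
  exact h

def shiftP (i : Fin 2) (d : Nring) : Prop := ∀ x : Nring, medRel ((i, x) : Qc) (i, x + d)

lemma shiftP_zero (i : Fin 2) : shiftP i 0 := fun x => by
  simpa using medRel.refl ((i, x) : Qc)

lemma shiftP_add {i : Fin 2} {d e : Nring} (hd : shiftP i d) (he : shiftP i e) :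
    shiftP i (d + e) := fun x => by
  have h := (hd x).trans (he (x + d))
  have e1 : x + d + e = x + (d + e) := by ring
  rwa [e1] at h

lemma shiftP_neg {i : Fin 2} {d : Nring} (hd : shiftP i d) : shiftP i (-d) := fun x => by
  have h := (hd (x - d)).symm
  have e1 : x - d + d = x := by ring
  have e2 : x - d = x + -d := by ring
  rwa [e1, e2] at h

lemma shiftP_t {i : Fin 2} {d : Nring} (hd : shiftP i d) : shiftP i (tN * d) := fun x => by
  have h := transl (hd 0) x
  have e1 : (0 : Nring) + d - 0 = d := by ring
  rwa [e1] at h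

lemma shiftP_tinv {i : Fin 2} {d : Nring} (hd : shiftP i d) : shiftP i ((1 + tN) * d) :=
  fun x => by
  have h := translInv (hd 0) x
  have e1 : (0 : Nring) + d - 0 = d := by ring
  rwa [e1] at h

lemma shiftP_one (i : Fin 2) : shiftP i 1 := by
  have h : shiftP i ((1 + tN) * tN) := fun x => by
    have h2 := translInv (base_rel i) x
    have e : (-2 : Nring) - (-2 - tN) = tN := by ring
    rwa [e] at h2
  have e2 : (1 + tN) * tN = 1 := by linear_combination hJ
  rwa [e2] at h

lemma shiftP_int (i : Fin 2) (n : ℤ) : shiftP i (n : Nring) := by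
  induction n using Int.induction_on with
  | zero => simpa using shiftP_zero i
  | succ k ih =>
      have e : (((k : ℤ) + 1 : ℤ) : Nring) = ((k : ℤ) : Nring) + 1 := by push_cast; ring
      rw [e]; exact shiftP_add ih (shiftP_one i)
  | pred k ih =>
      have e : ((-(k : ℤ) - 1 : ℤ) : Nring) = ((-(k : ℤ) : ℤ) : Nring) + -1 := by
        push_cast; ring
      rw [e]; exact shiftP_add ih (shiftP_neg (shiftP_one i))

lemma shiftP_all (i : Fin 2) (d : Nring) : shiftP i d := by
  obtain ⟨q, rfl⟩ := Ideal.Quotient.mk_surjective (I := Jideal) d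
  induction q using LaurentPolynomial.induction_on with
  | h_C a =>
      have e : Ideal.Quotient.mk Jideal (C a) = (a : Nring) :=
        eq_intCast ((Ideal.Quotient.mk Jideal).comp (LaurentPolynomial.C)) a
      rw [e]; exact shiftP_int i a
  | h_add hp hq => rw [map_add]; exact shiftP_add hp hq
  | h_C_mul_T n a ih =>
      have e : (C a * T ((n : ℤ) + 1) : Lring) = T 1 * (C a * T (n : ℤ)) := by
        rw [T_add]; ring
      rw [e, map_mul]
      exact shiftP_t ih
  | h_C_mul_T_Z n a ih =>
      have e : (C a * T (-(n : ℤ) - 1) : Lring) = T (-1) * (C a * T (-(n : ℤ))) := by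
        rw [show (-(n : ℤ) - 1) = (-(n : ℤ)) + (-1) by ring, T_add]; ring
      rw [e, map_mul, mkT_neg_one]
      exact shiftP_tinv ih

lemma relAll (i : Fin 2) (x y : Nring) : medRel ((i, x) : Qc) (i, y) := by
  have h := shiftP_all i (y - x) x
  have e : x + (y - x) = y := by ring
  rwa [e] at h

lemma medRel_fst {a b : Qc} (h : medRel a b) : a.1 = b.1 := by
  induction h with
  | refl a => rfl
  | symm _ ih => exact ih.symm
  | trans _ _ ih1 ih2 => exact ih1.trans ih2
  | compat_op _ _ ih1 ih2 => rw [rop_fst, rop_fst]; exact ih1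
  | compat_inv _ _ ih1 ih2 => rw [rinv_fst, rinv_fst]; exact ih1
  | medial w x y z => rw [rop_fst, rop_fst, rop_fst, rop_fst]


/-- The largest medial quotient of Q^rev has exactly two elements and is a
trivial quandle (x ▷ y = x). -/
theorem stmt17 :
    (∃ a b : Qc, ¬ medRel a b ∧ ∀ c : Qc, medRel c a ∨ medRel c b) ∧
    (∀ p q : Qc, medRel (rop p q) p) := by
  constructor
  · refine ⟨((0 : Fin 2), 0), ((1 : Fin 2), 0), ?_, ?_⟩
    · intro h
      have := medRel_fst h
      simp at this
    · rintro ⟨i, x⟩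
      fin_cases i
      · exact Or.inl (relAll 0 x 0)
      · exact Or.inr (relAll 1 x 0)
  · rintro ⟨i, x⟩ q
    have e : rop ((i, x) : Qc) q = (i, (rop ((i, x) : Qc) q).2) :=
      Prod.ext (rop_fst _ _) rfl
    rw [e]
    exact relAll i _ x
end
end
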